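/- arXiv:1709.08060 — 4 statements merged into one kernel-verified Lean document; each statement's English description precedes it below -/
import Mathlib

section
/- Let K=(G,M,I) be a finite formal context and K_a the context obtained by adding a fresh attribute a with extension a' ⊆ G. Then |𝔅(K_a)| − |𝔅(K)| = h(a), and h(a) ≤ |𝔅(K)|; in particular |𝔅(K_a)| ≤ 2·|𝔅(K)|. -/
/-- The intent (attribute derivation) of a set of objects. -/
def intentOf {G M : Type*} (I : G → M → Prop) (A : Set G) : Set M :=
  {m | ∀ g ∈ A, I g m}

/-- The extent (object derivation) of a set of attributes. -/
def extentOf {G M : Type*} (I : G → M → Prop) (B : Set M) : Set G :=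
  {g | ∀ m ∈ B, I g m}

/-- The formal concepts of a context: pairs `(A, B)` with `A' = B` and `B' = A`. -/
def Concepts {G M : Type*} (I : G → M → Prop) : Set (Set G × Set M) :=
  {p | intentOf I p.1 = p.2 ∧ extentOf I p.2 = p.1}

/-- The extents of a context: sets of objects with `A'' = A`. -/
def Extents {G M : Type*} (I : G → M → Prop) : Set (Set G) :=
  {A | extentOf I (intentOf I A) = A}

/-- The augmented context `K_a`: a fresh attribute (coded as `none : Option M`)
is added, with prescribed extension `aext ⊆ G`. -/
def addAttr {G M : Type*} (I : G → M → Prop) (aext : Set G) :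
    G → Option M → Prop :=
  fun g m => match m with
    | none => g ∈ aext
    | some m' => I g m'

/-- `H(a) = {A ∩ a' | A ∈ Ext(K), A ∩ a' ∉ Ext(K)}`. -/
def Hset {G M : Type*} (I : G → M → Prop) (aext : Set G) : Set (Set G) :=
  {X | (∃ A ∈ Extents I, X = A ∩ aext) ∧ X ∉ Extents I}

/-!
Concepts correspond to extents. An extent of `K_a` has the form `B'` for a set `B` of
attributes of `K_a`; it is the extent `(B ∖ {a})'` of `K` if `a ∉ B`, and the trace
`(B ∖ {a})' ∩ a'` of one if `a ∈ B`. Hence `Ext(K_a) = Ext(K) ∪ {A ∩ a' | A ∈ Ext(K)}`,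
the new extents are exactly `H(a)`, and `A ↦ A ∩ a'` maps `Ext(K)` onto a superset of `H(a)`,
so `h(a) ≤ |Ext(K)| = |𝔅(K)|`.
-/

section

open Set Order

variable {G M : Type*} (I : G → M → Prop)

lemma mem_extents_iff_isExtent {A : Set G} : A ∈ Extents I ↔ IsExtent I A :=
  isExtent_iff.symm

noncomputable def conceptsEquivExtents : Concepts I ≃ Extents I where
  toFun p := ⟨p.1.1, show extentOf I (intentOf I p.1.1) = p.1.1 by rw [p.2.1, p.2.2]⟩
  invFun A := ⟨(A.1, intentOf I A.1), rfl, A.2⟩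
  left_inv p := Subtype.ext (Prod.ext rfl p.2.1)
  right_inv _ := rfl

lemma card_concepts_eq_ncard_extents : Nat.card (Concepts I) = (Extents I).ncard := by
  rw [Nat.card_congr (conceptsEquivExtents I), Nat.card_coe_set_eq]

variable (aext : Set G)

lemma lowerPolar_addAttr (t : Set (Option M)) :
    lowerPolar (addAttr I aext) t =
      lowerPolar I (some ⁻¹' t) ∩ {g | none ∈ t → g ∈ aext} := by
  ext g
  simp only [mem_lowerPolar_iff, mem_inter_iff, mem_preimage, mem_ofPred_eq, Option.forall,
    addAttr]
  tauto

lemma isExtent_addAttr_iff {X : Set G} :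
    IsExtent (addAttr I aext) X ↔ IsExtent I X ∨ ∃ A, IsExtent I A ∧ A ∩ aext = X := by
  constructor
  · rintro ⟨t, rfl⟩
    rw [lowerPolar_addAttr]
    by_cases ha : none ∈ t
    · exact .inr ⟨_, isExtent_lowerPolar, by simp [ha]; rfl⟩
    · simp [ha]
  · rintro (⟨t, rfl⟩ | ⟨A, ⟨t, rfl⟩, rfl⟩)
    · exact ⟨some '' t, by
        simp [lowerPolar_addAttr, preimage_image_eq _ (Option.some_injective M)]⟩
    · have hpre : some ⁻¹' insert none (some '' t) = t := by ext; simp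
      exact ⟨insert none (some '' t), by simp [lowerPolar_addAttr, hpre]⟩

lemma extents_addAttr :
    Extents (addAttr I aext) = Extents I ∪ (· ∩ aext) '' Extents I := by
  ext X
  simp [mem_extents_iff_isExtent, isExtent_addAttr_iff]

lemma hset_eq_image_sdiff : Hset I aext = (· ∩ aext) '' Extents I \ Extents I := by
  ext X
  simp [Hset, eq_comm]

end

theorem stmt4_general {G M : Type*} [Fintype G] (I : G → M → Prop)
    (aext : Set G) :
    Nat.card (Concepts (addAttr I aext)) =
        Nat.card (Concepts I) + Nat.card (Hset I aext) ∧
    Nat.card (Hset I aext) ≤ Nat.card (Concepts I) ∧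
    Nat.card (Concepts (addAttr I aext)) ≤ 2 * Nat.card (Concepts I) := by
  have hunion : Extents (addAttr I aext) = Extents I ∪ Hset I aext := by
    rw [extents_addAttr, hset_eq_image_sdiff, Set.union_sdiff_self]
  have hdisj : Disjoint (Extents I) (Hset I aext) := by
    rw [hset_eq_image_sdiff]
    exact Set.disjoint_sdiff_right
  have hcard : (Extents (addAttr I aext)).ncard = (Extents I).ncard + (Hset I aext).ncard := by
    rw [hunion, Set.ncard_union_eq hdisj]
  have hle : (Hset I aext).ncard ≤ (Extents I).ncard := by
    rw [hset_eq_image_sdiff]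
    exact (Set.ncard_le_ncard Set.sdiff_subset).trans (Set.ncard_image_le (Set.toFinite _))
  rw [card_concepts_eq_ncard_extents, card_concepts_eq_ncard_extents, Nat.card_coe_set_eq]
  omega

/-- The increase in the number of concepts due to adding the attribute `a` is
`h(a) = |H(a)|`, and `h(a) ≤ |𝔅(K)|`; in particular `|𝔅(K_a)| ≤ 2·|𝔅(K)|`. -/
theorem stmt4 {G M : Type*} [Fintype G] [Fintype M] (I : G → M → Prop)
    (aext : Set G) :
    Nat.card (Concepts (addAttr I aext)) =
        Nat.card (Concepts I) + Nat.card (Hset I aext) ∧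
    Nat.card (Hset I aext) ≤ Nat.card (Concepts I) ∧
    Nat.card (Concepts (addAttr I aext)) ≤ 2 * Nat.card (Concepts I) :=
  stmt4_general I aext
end

section
/- Let K=(G,M,I) be a finite formal context with ∅'' ≠ ∅, and let K_a be the context obtained by adding a fresh attribute a whose extension is a' = G \ ∅''. Then |𝔅(K_a)| = 2·|𝔅(K)|. -/
open Set

section

variable {G M : Type*} {I : G → M → Prop}

theorem mem_extentOf_intentOf_empty {g : G} :
    g ∈ extentOf I (intentOf I ∅) ↔ ∀ m, I g m :=
  ⟨fun h m => h m fun _ hg => hg.elim, fun h m _ => h m⟩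

theorem intentOf_diff_of_full {E : Set G} (hE : ∀ g ∈ E, ∀ m, I g m) (A : Set G) :
    intentOf I (A \ E) = intentOf I A := by
  ext m
  refine ⟨fun h g hg => ?_, fun h g hg => h g hg.1⟩
  by_cases hgE : g ∈ E
  · exact hE g hgE m
  · exact h g ⟨hg, hgE⟩

theorem intentOf_antitone {A₁ A₂ : Set G} (h : A₁ ⊆ A₂) : intentOf I A₂ ⊆ intentOf I A₁ :=
  fun _ hm g hg => hm g (h hg)

theorem subset_intentOf_extentOf (B : Set M) : B ⊆ intentOf I (extentOf I B) :=
  fun m hm _ hg => hg m hm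

theorem subset_extentOf_intentOf (A : Set G) : A ⊆ extentOf I (intentOf I A) :=
  fun g hg _ hm => hm g hg

theorem mk_extentOf_intentOf_mem_concepts (A : Set G) :
    (extentOf I (intentOf I A), intentOf I A) ∈ Concepts I :=
  ⟨(intentOf_antitone (subset_extentOf_intentOf A)).antisymm (subset_intentOf_extentOf _), rfl⟩

theorem Option.insert_none_image_some_preimage {α : Type*} {s : Set (Option α)} (h : none ∈ s) :
    insert none (some '' (some ⁻¹' s)) = s := by
  ext (_ | a) <;> simp [h]

theorem Option.image_some_preimage_some {α : Type*} {s : Set (Option α)} (h : none ∉ s) :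
    some '' (some ⁻¹' s) = s := by
  ext (_ | a) <;> simp [h]

section addAttr

variable {aext A : Set G}

theorem none_mem_intentOf_addAttr : none ∈ intentOf (addAttr I aext) A ↔ A ⊆ aext := Iff.rfl

theorem preimage_some_intentOf_addAttr :
    some ⁻¹' intentOf (addAttr I aext) A = intentOf I A := rfl

theorem extentOf_addAttr_image_some (B : Set M) :
    extentOf (addAttr I aext) (some '' B) = extentOf I B := by
  ext g
  simp [extentOf, addAttr]

theorem extentOf_addAttr_insert_none (B : Set M) :
    extentOf (addAttr I aext) (insert none (some '' B)) = extentOf I B ∩ aext := by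
  ext g
  simp [extentOf, addAttr, and_comm]

end addAttr

section FullObjects

variable {E : Set G} {A : Set G} {B : Set M}

theorem mk_image_some_mem_concepts_addAttr (hE : ∀ g ∈ E, ∀ m, I g m) (hEne : E.Nonempty)
    (h : (A, B) ∈ Concepts I) : (A, some '' B) ∈ Concepts (addAttr I Eᶜ) := by
  obtain ⟨hAB, hBA⟩ : intentOf I A = B ∧ extentOf I B = A := h
  have hEA : E ⊆ A := hBA ▸ fun g hg m _ => hE g hg m
  refine ⟨?_, (extentOf_addAttr_image_some B).trans hBA⟩
  ext (_ | m)
  · obtain ⟨g, hg⟩ := hEne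
    simpa [none_mem_intentOf_addAttr] using fun hA => hA (hEA hg) hg
  · rw [(Option.some_injective M).mem_set_image, ← hAB]
    rfl

theorem mk_diff_insert_none_mem_concepts_addAttr (hE : ∀ g ∈ E, ∀ m, I g m)
    (h : (A, B) ∈ Concepts I) :
    (A \ E, insert none (some '' B)) ∈ Concepts (addAttr I Eᶜ) := by
  obtain ⟨hAB, hBA⟩ : intentOf I A = B ∧ extentOf I B = A := h
  refine ⟨?_, by rw [extentOf_addAttr_insert_none, hBA, sdiff_eq]⟩
  ext (_ | m)
  · simp only [mem_insert_iff, true_or, iff_true]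
    exact fun g hg => hg.2
  · rw [mem_insert_iff, (Option.some_injective M).mem_set_image, ← hAB,
      ← intentOf_diff_of_full hE A]
    simp only [reduceCtorEq, false_or]
    rfl

open Classical in
variable (E) in
noncomputable def conceptsAddAttrComplEquiv (hE : ∀ g ∈ E, ∀ m, I g m) (hEne : E.Nonempty) :
    Bool × Concepts I ≃ Concepts (addAttr I Eᶜ) where
  toFun
    | (false, ⟨(A, B), h⟩) => ⟨(A, some '' B), mk_image_some_mem_concepts_addAttr hE hEne h⟩
    | (true, ⟨(A, B), h⟩) =>
      ⟨(A \ E, insert none (some '' B)), mk_diff_insert_none_mem_concepts_addAttr hE h⟩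
  invFun c := (decide (none ∈ c.1.2), ⟨_, mk_extentOf_intentOf_mem_concepts c.1.1⟩)
  left_inv := by
    rintro ⟨_ | _, ⟨A, B⟩, hAB, hBA⟩
    · simp [hAB, hBA]
    · simp [intentOf_diff_of_full hE, hAB, hBA]
  right_inv := by
    rintro ⟨⟨A', B'⟩, h⟩
    obtain ⟨hAB, hBA⟩ :
        intentOf (addAttr I Eᶜ) A' = B' ∧ extentOf (addAttr I Eᶜ) B' = A' := h
    have hB : intentOf I A' = some ⁻¹' B' := hAB ▸ preimage_some_intentOf_addAttr.symm
    by_cases hn : none ∈ B'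
    · have hA : extentOf I (some ⁻¹' B') \ E = A' := by
        rw [sdiff_eq, ← extentOf_addAttr_insert_none, Option.insert_none_image_some_preimage hn,
          hBA]
      simp only [hn, decide_true, hB]
      exact Subtype.ext (Prod.ext hA (Option.insert_none_image_some_preimage hn))
    · have hA : extentOf I (some ⁻¹' B') = A' := by
        rw [← extentOf_addAttr_image_some (aext := Eᶜ), Option.image_some_preimage_some hn, hBA]
      simp only [hn, decide_false, hB]
      exact Subtype.ext (Prod.ext hA (Option.image_some_preimage_some hn))

end FullObjects

end

theorem stmt6_general {G M : Type*} (I : G → M → Prop)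
    (hne : extentOf I (intentOf I (∅ : Set G)) ≠ ∅) :
    Nat.card (Concepts (addAttr I (extentOf I (intentOf I (∅ : Set G)))ᶜ)) =
      2 * Nat.card (Concepts I) := by
  have hfull : ∀ g ∈ extentOf I (intentOf I ∅), ∀ m, I g m :=
    fun _ => mem_extentOf_intentOf_empty.mp
  rw [← Nat.card_congr (conceptsAddAttrComplEquiv _ hfull (nonempty_iff_ne_empty.mpr hne)),
    Nat.card_prod, Nat.card_eq_fintype_card (α := Bool), Fintype.card_bool]

/-- If `∅'' ≠ ∅` and the added attribute `a` has extension `a' = G \ ∅''`,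
then `|𝔅(K_a)| = 2 · |𝔅(K)|`. -/
theorem stmt6 {G M : Type*} [Fintype G] [Fintype M] (I : G → M → Prop)
    (hne : extentOf I (intentOf I (∅ : Set G)) ≠ ∅) :
    Nat.card (Concepts (addAttr I (extentOf I (intentOf I (∅ : Set G)))ᶜ)) =
      2 * Nat.card (Concepts I) :=
  stmt6_general I hne
end

section
/- For n ≥ 2 and 1 ≤ k < n, the formal context K_02 = (S_n ∪ {g_1}, S_n ∪ {m_2}, I), where (g,m) ∈ I iff g,m ∈ S_n and g ≠ m, or g = g_1 and m ∈ S_n, or g ∈ {k+1,…,n} and m = m_2, has exactly 2^n + 2^{n−k} formal concepts; likewise the context K_01 = (S_n ∪ {g_1}, S_n ∪ {m_1}, I) with m_1' = {1,…,k} has exactly 2^n + 2^k formal concepts. -/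
/-- The context `K_02 = (S_n ∪ {g_1}, S_n ∪ {m_2}, I)`: objects are
`Fin n ⊕ Unit` (with `Sum.inr () = g_1`, and `i : Fin n` coding the element
`i+1` of `S_n = {1,…,n}`), attributes are `Fin n ⊕ Unit` (with
`Sum.inr () = m_2`); `(g, m) ∈ I` iff `g, m ∈ S_n` and `g ≠ m`, or `g = g_1`
and `m ∈ S_n`, or `g ∈ {k+1,…,n}` (i.e. `k ≤ i` for the code `i`) and
`m = m_2`. -/
def I02 (n k : ℕ) : (Fin n ⊕ Unit) → (Fin n ⊕ Unit) → Prop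
  | Sum.inl g, Sum.inl m => g ≠ m
  | Sum.inr _, Sum.inl _ => True
  | Sum.inl g, Sum.inr _ => k ≤ (g : ℕ)
  | Sum.inr _, Sum.inr _ => False

/-- The context `K_01 = (S_n ∪ {g_1}, S_n ∪ {m_1}, I)` with
`m_1' = {1,…,k}` (i.e. the codes `i < k`). -/
def I01 (n k : ℕ) : (Fin n ⊕ Unit) → (Fin n ⊕ Unit) → Prop
  | Sum.inl g, Sum.inl m => g ≠ m
  | Sum.inr _, Sum.inl _ => True
  | Sum.inl g, Sum.inr _ => (g : ℕ) < k
  | Sum.inr _, Sum.inr _ => False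


/-! In the contranominal scale on `α` (object `g` has attribute `m` iff `g ≠ m`) every set of
objects `A` is an extent, with intent `Aᶜ`. Adjoining an object `g₁` having every attribute of `α`
and an attribute `m₁` whose extent is `{a | P a}`, a set of objects is closed exactly when it
contains `g₁` or its part in `α` lies in `P`. The extents are therefore `A ∪ {g₁}` for arbitrary
`A ⊆ α` and `A` for `A ⊆ P`, giving `2 ^ |α| + 2 ^ |P|` concepts. -/

theorem card_concepts_eq_card_extents {G M : Type*} (I : G → M → Prop) :
    Nat.card (Concepts I) = Nat.card {A : Set G | extentOf I (intentOf I A) = A} :=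
  Nat.card_congr
    { toFun := fun p => ⟨p.1.1, (congrArg (extentOf I) p.2.1).trans p.2.2⟩
      invFun := fun A => ⟨(A.1, intentOf I A.1), rfl, A.2⟩
      left_inv := fun p => by ext1; exact Prod.ext rfl p.2.1
      right_inv := fun _ => rfl }

theorem card_set_eq_two_pow (β : Type*) [Finite β] : Nat.card (Set β) = 2 ^ Nat.card β := by
  have := Fintype.ofFinite β
  simp [Nat.card_eq_fintype_card, Fintype.card_set]

theorem Fin.card_subtype_le_val (n k : ℕ) : Nat.card {i : Fin n // k ≤ (i : ℕ)} = n - k := by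
  simp only [Nat.card_eq_fintype_card, Fintype.card_subtype, ← not_lt, Finset.filter_not,
    Finset.card_sdiff_of_subset (Finset.filter_subset _ _), Fin.card_filter_val_lt,
    Finset.card_univ, Fintype.card_fin]
  omega

theorem Fin.card_subtype_val_lt {n k : ℕ} (h : k ≤ n) :
    Nat.card {i : Fin n // (i : ℕ) < k} = k := by
  simp [Nat.card_eq_fintype_card, Fintype.card_subtype, Fin.card_filter_val_lt, h]

section ExtendedContranominal

open Sum

variable {α : Type*} (P : α → Prop)

-- As an object `inr ()` is the extra object `g₁`; as an attribute, the extra attribute `m₁`.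
def extendedContranominal : α ⊕ Unit → α ⊕ Unit → Prop
  | inl g, inl m => g ≠ m
  | inr _, inl _ => True
  | inl g, inr _ => P g
  | inr _, inr _ => False

variable {P}

@[simp]
theorem mem_intentOf_extendedContranominal_inl {X : Set (α ⊕ Unit)} {m : α} :
    inl m ∈ intentOf (extendedContranominal P) X ↔ inl m ∉ X := by
  refine ⟨fun h hm => h _ hm rfl, fun h => ?_⟩
  rintro (g | _) hg
  · exact fun hgm => h (hgm ▸ hg)
  · trivial

@[simp]
theorem mem_intentOf_extendedContranominal_inr {X : Set (α ⊕ Unit)} {u : Unit} :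
    inr u ∈ intentOf (extendedContranominal P) X ↔ inr () ∉ X ∧ ∀ a, inl a ∈ X → P a := by
  refine ⟨fun h => ⟨fun hX => h _ hX, fun a ha => h _ ha⟩, ?_⟩
  rintro ⟨hX, hP⟩ (g | _) hg
  · exact hP g hg
  · exact hX hg

@[simp]
theorem mem_extentOf_extendedContranominal_inl {Y : Set (α ⊕ Unit)} {g : α} :
    inl g ∈ extentOf (extendedContranominal P) Y ↔ inl g ∉ Y ∧ (inr () ∈ Y → P g) := by
  refine ⟨fun h => ⟨fun hY => h _ hY rfl, fun hY => h _ hY⟩, ?_⟩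
  rintro ⟨hg, hP⟩ (m | _) hm
  · exact fun hgm => hg (hgm ▸ hm)
  · exact hP hm

@[simp]
theorem mem_extentOf_extendedContranominal_inr {Y : Set (α ⊕ Unit)} {u : Unit} :
    inr u ∈ extentOf (extendedContranominal P) Y ↔ inr () ∉ Y := by
  refine ⟨fun h hY => h _ hY, ?_⟩
  rintro hY (m | _) hm
  · trivial
  · exact hY hm

theorem extentOf_intentOf_extendedContranominal_eq_self_iff (X : Set (α ⊕ Unit)) :
    extentOf (extendedContranominal P) (intentOf (extendedContranominal P) X) = X ↔
      inr () ∈ X ∨ ∀ a, inl a ∈ X → P a := by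
  simp only [Set.ext_iff, Sum.forall, mem_extentOf_extendedContranominal_inl,
    mem_extentOf_extendedContranominal_inr, mem_intentOf_extendedContranominal_inl,
    mem_intentOf_extendedContranominal_inr]
  by_cases hX : inr () ∈ X
  · simp [hX]
  · simpa [hX] using fun hP a ha _ => hP a ha

variable (P) in
def extendedContranominalExtent : Set α ⊕ Set {a // P a} → Set (α ⊕ Unit) :=
  Sum.elim (fun A => insert (inr ()) (inl '' A)) (fun A => inl '' (Subtype.val '' A))

theorem extendedContranominalExtent_injective :
    Function.Injective (extendedContranominalExtent P) := by
  refine Function.Injective.sumElim (fun A B h => ?_) (fun A B h => ?_) (fun A B h => ?_)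
  · exact Set.ext fun a => by simpa using congrArg (inl a ∈ ·) h
  · exact Set.ext fun a => by simpa [a.2] using congrArg (inl a.1 ∈ ·) h
  · simpa using congrArg (inr () ∈ ·) h

theorem range_extendedContranominalExtent :
    Set.range (extendedContranominalExtent P) = {X | inr () ∈ X ∨ ∀ a, inl a ∈ X → P a} := by
  ext X
  refine ⟨?_, fun hX => ?_⟩
  · rintro ⟨A | A, rfl⟩ <;> simp +contextual [extendedContranominalExtent]
  by_cases hg : inr () ∈ X
  · refine ⟨inl (inl ⁻¹' X), ?_⟩
    ext (a | _) <;> simp [extendedContranominalExtent, hg]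
  · refine ⟨inr {a | inl a.1 ∈ X}, ?_⟩
    ext (a | _) <;> simp [extendedContranominalExtent, hg]
    exact hX.resolve_left hg a

theorem card_concepts_extendedContranominal [Finite α] :
    Nat.card (Concepts (extendedContranominal P)) = 2 ^ Nat.card α + 2 ^ Nat.card {a // P a} := by
  simp_rw [card_concepts_eq_card_extents, extentOf_intentOf_extendedContranominal_eq_self_iff,
    ← range_extendedContranominalExtent,
    Nat.card_range_of_injective extendedContranominalExtent_injective,
    Nat.card_sum, card_set_eq_two_pow]

end ExtendedContranominal

theorem stmt8_general (n k : ℕ) (hkn : k < n) :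
    Nat.card (Concepts (I02 n k)) = 2 ^ n + 2 ^ (n - k) ∧
    Nat.card (Concepts (I01 n k)) = 2 ^ n + 2 ^ k := by
  have h02 : I02 n k = extendedContranominal (fun g : Fin n => k ≤ (g : ℕ)) := by
    funext g m; cases g <;> cases m <;> rfl
  have h01 : I01 n k = extendedContranominal (fun g : Fin n => (g : ℕ) < k) := by
    funext g m; cases g <;> cases m <;> rfl
  rw [h02, h01, card_concepts_extendedContranominal, card_concepts_extendedContranominal,
    Nat.card_fin, Fin.card_subtype_le_val, Fin.card_subtype_val_lt hkn.le]
  exact ⟨rfl, rfl⟩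

/-- For `n ≥ 2` and `1 ≤ k < n`, the context `K_02` has exactly
`2^n + 2^(n-k)` formal concepts, and the context `K_01` has exactly
`2^n + 2^k` formal concepts. -/
theorem stmt8 (n k : ℕ) (hn : 2 ≤ n) (hk1 : 1 ≤ k) (hkn : k < n) :
    Nat.card (Concepts (I02 n k)) = 2 ^ n + 2 ^ (n - k) ∧
    Nat.card (Concepts (I01 n k)) = 2 ^ n + 2 ^ k :=
  stmt8_general n k hkn
end

section
/- For n ≥ 2 and 1 ≤ k < n, the formal context K^k_n has exactly 2^n + 2^{n−k} + 2^k − 1 formal concepts. -/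
/-- The context `K^k_n = (S_n ∪ {g_1}, S_n ∪ {m_1, m_2}, I)`: objects are
`Fin n ⊕ Unit` (with `Sum.inr () = g_1`, and `i : Fin n` coding the element
`i+1` of `S_n = {1,…,n}`); attributes are `Fin n ⊕ Bool` (with
`Sum.inr false = m_1` and `Sum.inr true = m_2`); `m_1' = {1,…,k}` (codes
`i < k`) and `m_2' = {k+1,…,n}` (codes `k ≤ i`). -/
def Kk (n k : ℕ) : (Fin n ⊕ Unit) → (Fin n ⊕ Bool) → Prop
  | Sum.inl g, Sum.inl m => g ≠ m
  | Sum.inr _, Sum.inl _ => True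
  | Sum.inl g, Sum.inr false => (g : ℕ) < k
  | Sum.inl g, Sum.inr true => k ≤ (g : ℕ)
  | Sum.inr _, Sum.inr _ => False

/-! A concept is determined by its extent. Every set of objects containing `g₁` is an extent: it
is the intersection of the extents `(S_n ∪ {g₁}) \ {j}` of the attributes `j` it misses. The intent of
an extent `A` without `g₁` contains an attribute `g₁` lacks, i.e. `m₁` or `m₂`, so `A ⊆ {1,…,k}` or
`A ⊆ {k+1,…,n}`; conversely such an `A` is `(A ∪ {g₁}) ∩ m₁'` or `(A ∪ {g₁}) ∩ m₂'`. Hence there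
are `2^n` extents of the first kind and `2^k + 2^(n-k) - 1` of the second. -/

open Set Order

theorem Set.ncard_setOf_mem_or_subset_or_subset {α : Type*} [Finite α] {a : α} {L R : Set α}
    (haL : a ∉ L) (haR : a ∉ R) (hLR : Disjoint L R) :
    {A : Set α | a ∈ A ∨ A ⊆ L ∨ A ⊆ R}.ncard =
      2 ^ (Nat.card α - 1) + 2 ^ L.ncard + 2 ^ R.ncard - 1 := by
  have hmem : {A : Set α | a ∈ A} = compl '' 𝒫 {a}ᶜ := by
    ext A
    refine ⟨fun h => ⟨Aᶜ, by simpa, compl_compl A⟩, ?_⟩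
    rintro ⟨B, hB, rfl⟩
    simpa using hB
  have hmem_card : {A : Set α | a ∈ A}.ncard = 2 ^ (Nat.card α - 1) := by
    rw [hmem, ncard_image_of_injective _ compl_injective, ncard_powerset, ncard_compl, ncard_singleton]
  have hdisj : Disjoint {A : Set α | a ∈ A} (𝒫 L ∪ 𝒫 R) := by
    rw [disjoint_left]
    rintro A haA (hA | hA)
    exacts [haL (hA haA), haR (hA haA)]
  have hpow_card : (𝒫 L ∪ 𝒫 R).ncard + 1 = 2 ^ L.ncard + 2 ^ R.ncard := by
    rw [← ncard_powerset L, ← ncard_powerset R, ← ncard_union_add_ncard_inter, ← powerset_inter,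
      hLR.inter_eq, powerset_empty, ncard_singleton]
  change ({A : Set α | a ∈ A} ∪ (𝒫 L ∪ 𝒫 R)).ncard = _
  rw [ncard_union_eq hdisj, hmem_card]
  omega

def conceptsEquivIsExtent {G M : Type*} (I : G → M → Prop) :
    Concepts I ≃ {A : Set G | IsExtent I A} where
  toFun p := ⟨p.1.1, p.1.2, p.2.2⟩
  invFun A := ⟨(A.1, upperPolar I A.1), rfl, A.2.eq⟩
  left_inv p := Subtype.ext (Prod.ext rfl p.2.1)
  right_inv _ := rfl

namespace Kk

theorem isExtent_insert_inr (n k : ℕ) (A : Set (Fin n ⊕ Unit)) :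
    IsExtent (Kk n k) (insert (Sum.inr ()) A) := by
  refine ⟨Sum.inl '' {j | Sum.inl j ∉ A}, ?_⟩
  ext (i | ⟨⟩)
  · simp [mem_lowerPolar_iff, Kk, not_imp_comm]
  · simp [mem_lowerPolar_iff, Kk]

theorem isExtent_iff {n k : ℕ} {A : Set (Fin n ⊕ Unit)} :
    IsExtent (Kk n k) A ↔ Sum.inr () ∈ A ∨ ∃ b, A ⊆ lowerPolar (Kk n k) {Sum.inr b} := by
  constructor
  · rintro ⟨t, rfl⟩
    by_cases h : Sum.inr () ∈ lowerPolar (Kk n k) t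
    · exact Or.inl h
    · simp only [mem_lowerPolar_iff, not_forall] at h
      obtain ⟨(j | b), hm, hK⟩ := h
      · exact absurd trivial hK
      · exact Or.inr ⟨b, lowerPolar_anti _ (singleton_subset_iff.2 hm)⟩
  · rintro (h | ⟨b, hb⟩)
    · rw [← insert_eq_of_mem h]
      exact isExtent_insert_inr n k A
    · have hinr : Sum.inr () ∉ lowerPolar (Kk n k) {Sum.inr b} := by
        simp [mem_lowerPolar_singleton, Kk]
      rw [← inter_eq_left.2 hb, ← insert_inter_of_notMem hinr]
      exact (isExtent_insert_inr n k A).inter isExtent_lowerPolar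

theorem lowerPolar_inr_false (n k : ℕ) :
    lowerPolar (Kk n k) {Sum.inr false} = Sum.inl '' {i : Fin n | (i : ℕ) < k} := by
  ext (i | ⟨⟩) <;> simp [mem_lowerPolar_singleton, Kk]

theorem lowerPolar_inr_true (n k : ℕ) :
    lowerPolar (Kk n k) {Sum.inr true} = Sum.inl '' {i : Fin n | (i : ℕ) < k}ᶜ := by
  ext (i | ⟨⟩) <;> simp [mem_lowerPolar_singleton, Kk]

end Kk

theorem stmt12_general (n k : ℕ) (hkn : k < n) :
    Nat.card (Concepts (Kk n k)) = 2 ^ n + 2 ^ (n - k) + 2 ^ k - 1 := by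
  have hL : {i : Fin n | (i : ℕ) < k}.ncard = k := by
    rw [← Fin.range_castLE hkn.le, ncard_range_of_injective (Fin.castLE_injective _), Nat.card_fin]
  have hLc : {i : Fin n | (i : ℕ) < k}ᶜ.ncard = n - k := by rw [ncard_compl, hL, Nat.card_fin]
  have hextents : {A | IsExtent (Kk n k) A} = {A | Sum.inr () ∈ A ∨
      A ⊆ Sum.inl '' {i : Fin n | (i : ℕ) < k} ∨ A ⊆ Sum.inl '' {i : Fin n | (i : ℕ) < k}ᶜ} := by
    simp only [Kk.isExtent_iff, Bool.exists_bool, Kk.lowerPolar_inr_false, Kk.lowerPolar_inr_true]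
  rw [Nat.card_congr (conceptsEquivIsExtent _), Nat.card_coe_set_eq, hextents,
    ncard_setOf_mem_or_subset_or_subset (by simp) (by simp)
      ((disjoint_image_iff Sum.inl_injective).2 disjoint_compl_right),
    ncard_image_of_injective _ Sum.inl_injective, ncard_image_of_injective _ Sum.inl_injective,
    hL, hLc]
  simp [add_right_comm]

/-- For `n ≥ 2` and `1 ≤ k < n`, the context `K^k_n` has exactly
`2^n + 2^(n-k) + 2^k − 1` formal concepts. -/
theorem stmt12 (n k : ℕ) (hn : 2 ≤ n) (hk1 : 1 ≤ k) (hkn : k < n) :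
    Nat.card (Concepts (Kk n k)) = 2 ^ n + 2 ^ (n - k) + 2 ^ k - 1 :=
  stmt12_general n k hkn
end
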